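/- Conversely, if a finite arc set z satisfies the degree constraints (every vertex touched by z has in-degree 1 and out-degree 1 in z) and the subtour elimination constraints (for every S not containing O, arcs of z inside S number at most |S|−1), then the arcs of z form a single cycle through O. -/
import Mathlib


open Finset

/-- A simple directed cycle through the depot `O`. -/
def IsSimpleCycleThrough {V : Type*} [DecidableEq V] (O : V) (z : Finset (V × V)) : Prop :=
  ∃ (n : ℕ) (hn : 0 < n) (f : Fin n → V), Function.Injective f ∧ f ⟨0, hn⟩ = O ∧
    z = Finset.image (fun i => (f i, f ⟨(i.1 + 1) % n, Nat.mod_lt _ hn⟩)) Finset.univ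

/-- If a nonempty finite arc set `z` satisfies the degree constraints (every vertex
touched by `z` has in-degree 1 and out-degree 1 in `z`), the depot `O` is touched,
and the subtour elimination constraints (for every nonempty `S` with `O ∉ S`, the arcs
of `z` inside `S` number at most `|S|−1`), then `z` is a single cycle through `O`. -/
theorem cycle_of_degree_and_subtour_constraints {V : Type*} [Fintype V] [DecidableEq V]
    (O : V) (z : Finset (V × V)) (hne : z.Nonempty)
    (hdeg : ∀ v : V, ((∃ a ∈ z, a.1 = v ∨ a.2 = v) →
      (z.filter fun a => a.1 = v).card = 1 ∧ (z.filter fun a => a.2 = v).card = 1))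
    (hO : ∃ a ∈ z, a.1 = O ∨ a.2 = O)
    (hsub : ∀ S : Finset V, O ∉ S → S.Nonempty →
      (z.filter fun a => a.1 ∈ S ∧ a.2 ∈ S).card ≤ S.card - 1) :
    IsSimpleCycleThrough O z := by
  classical
  -- uniqueness of outgoing / incoming arcs
  have out_unique : ∀ a ∈ z, ∀ b ∈ z, a.1 = b.1 → a = b := by
    intro a ha b hb h
    have h1 := (hdeg a.1 ⟨a, ha, Or.inl rfl⟩).1
    exact Finset.card_le_one.mp h1.le a (mem_filter.2 ⟨ha, rfl⟩)
      b (mem_filter.2 ⟨hb, h.symm⟩)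
  have in_unique : ∀ a ∈ z, ∀ b ∈ z, a.2 = b.2 → a = b := by
    intro a ha b hb h
    have h1 := (hdeg a.2 ⟨a, ha, Or.inr rfl⟩).2
    exact Finset.card_le_one.mp h1.le a (mem_filter.2 ⟨ha, rfl⟩)
      b (mem_filter.2 ⟨hb, h.symm⟩)
  have out_exists : ∀ v : V, (∃ a ∈ z, a.1 = v ∨ a.2 = v) → ∃ b ∈ z, b.1 = v := by
    intro v hv
    have h1 := (hdeg v hv).1
    obtain ⟨b, hb⟩ := Finset.card_eq_one.mp h1
    have : b ∈ z.filter fun a => a.1 = v := hb ▸ mem_singleton_self b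
    exact ⟨b, (mem_filter.mp this).1, (mem_filter.mp this).2⟩
  -- successor map
  obtain ⟨σ, hσ⟩ : ∃ σ : V × V → V × V, ∀ a ∈ z, σ a ∈ z ∧ (σ a).1 = a.2 := by
    refine ⟨fun a => if h : ∃ b ∈ z, b.1 = a.2 then h.choose else a, ?_⟩
    intro a ha
    have h : ∃ b ∈ z, b.1 = a.2 := out_exists a.2 ⟨a, ha, Or.inr rfl⟩
    simp only [dif_pos h]
    exact h.choose_spec
  have hσz : ∀ a ∈ z, σ a ∈ z := fun a ha => (hσ a ha).1
  have hσ1 : ∀ a ∈ z, (σ a).1 = a.2 := fun a ha => (hσ a ha).2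
  have σinj : ∀ a ∈ z, ∀ b ∈ z, σ a = σ b → a = b := by
    intro a ha b hb h
    apply in_unique a ha b hb
    rw [← hσ1 a ha, ← hσ1 b hb, h]
  have iter_mem : ∀ k : ℕ, ∀ a ∈ z, σ^[k] a ∈ z := by
    intro k
    induction k with
    | zero => intro a ha; simpa using ha
    | succ k ih =>
      intro a ha
      rw [Function.iterate_succ_apply']
      exact hσz _ (ih a ha)
  have iter_inj : ∀ k : ℕ, ∀ a ∈ z, ∀ b ∈ z, σ^[k] a = σ^[k] b → a = b := by
    intro k
    induction k with
    | zero => intro a _ b _ h; simpa using h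
    | succ k ih =>
      intro a ha b hb h
      rw [Function.iterate_succ_apply', Function.iterate_succ_apply'] at h
      exact ih a ha b hb (σinj _ (iter_mem k a ha) _ (iter_mem k b hb) h)
  -- starting arc
  obtain ⟨a0, ha0z, ha0O⟩ : ∃ a ∈ z, a.1 = O := out_exists O hO
  -- cancellation helper
  have cancel : ∀ i j : ℕ, i ≤ j → σ^[i] a0 = σ^[j] a0 → σ^[j - i] a0 = a0 := by
    intro i j hij h
    have hj : j = i + (j - i) := by omega
    rw [hj, Function.iterate_add_apply] at h
    exact iter_inj i _ (iter_mem _ a0 ha0z) a0 ha0z h.symm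
  -- there is a positive period
  have key : ∃ m : ℕ, 0 < m ∧ σ^[m] a0 = a0 := by
    obtain ⟨i, hi, j, hj, hij, heq⟩ :=
      Finset.exists_ne_map_eq_of_card_lt_of_maps_to
        (s := Finset.range (z.card + 1)) (t := z) (by simp)
        (fun k _ => iter_mem k a0 ha0z)
    rcases hij.lt_or_gt with h | h
    · exact ⟨j - i, by omega, cancel i j h.le heq⟩
    · exact ⟨i - j, by omega, cancel j i h.le heq.symm⟩
  set n := Nat.find key with hn_def
  obtain ⟨hn, hper⟩ : 0 < n ∧ σ^[n] a0 = a0 := Nat.find_spec key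
  have hmin : ∀ m : ℕ, 0 < m → m < n → σ^[m] a0 ≠ a0 := by
    intro m hm hmn h
    exact Nat.find_min key hmn ⟨hm, h⟩
  have per_mul : ∀ q : ℕ, σ^[q * n] a0 = a0 := by
    intro q
    induction q with
    | zero => simp
    | succ q ih =>
      have : (q + 1) * n = q * n + n := by ring
      rw [this, Function.iterate_add_apply, hper, ih]
  have per_mod : ∀ k : ℕ, σ^[k] a0 = σ^[k % n] a0 := by
    intro k
    conv_lhs => rw [← Nat.mod_add_div k n]
    rw [Function.iterate_add_apply, mul_comm n (k / n), per_mul]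
  -- the cycle map
  set f : Fin n → V := fun i => (σ^[i.1] a0).1 with hf_def
  have finj : Function.Injective f := by
    intro i j h
    have hi : σ^[i.1] a0 ∈ z := iter_mem _ a0 ha0z
    have hj : σ^[j.1] a0 ∈ z := iter_mem _ a0 ha0z
    have heq : σ^[i.1] a0 = σ^[j.1] a0 := out_unique _ hi _ hj h
    have same : ∀ p q : Fin n, p.1 ≤ q.1 → σ^[p.1] a0 = σ^[q.1] a0 → p = q := by
      intro p q hpq h'
      have := cancel p.1 q.1 hpq h'
      by_contra hne'
      have h0 : 0 < q.1 - p.1 := by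
        rcases Nat.lt_or_ge p.1 q.1 with h'' | h''
        · omega
        · exact absurd (Fin.ext (le_antisymm hpq h'')) hne'
      exact hmin _ h0 (by omega) this
    rcases le_total i.1 j.1 with h' | h'
    · exact same i j h' heq
    · exact (same j i h' heq.symm).symm
  have f0 : f ⟨0, hn⟩ = O := by simpa [hf_def] using ha0O
  -- each cycle arc equals an orbit arc
  have arc_eq : ∀ i : Fin n,
      (f i, f ⟨(i.1 + 1) % n, Nat.mod_lt _ hn⟩) = σ^[i.1] a0 := by
    intro i
    have h1 : f i = (σ^[i.1] a0).1 := rfl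
    have h2 : f ⟨(i.1 + 1) % n, Nat.mod_lt _ hn⟩ = (σ^[i.1] a0).2 := by
      show (σ^[(i.1 + 1) % n] a0).1 = (σ^[i.1] a0).2
      rw [← per_mod, Function.iterate_succ_apply']
      exact hσ1 _ (iter_mem _ a0 ha0z)
    rw [h1, h2]
  -- every arc of z is in the orbit
  have cover : ∀ b ∈ z, ∃ k : ℕ, σ^[k] a0 = b := by
    by_contra hcon
    push_neg at hcon
    obtain ⟨b, hbz, hb⟩ := hcon
    set R := z.filter (fun c => ∀ k : ℕ, σ^[k] a0 ≠ c) with hR_def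
    have hbR : b ∈ R := mem_filter.2 ⟨hbz, hb⟩
    have hRz : ∀ c ∈ R, c ∈ z := fun c hc => (mem_filter.mp hc).1
    have hRorb : ∀ c ∈ R, ∀ k : ℕ, σ^[k] a0 ≠ c := fun c hc => (mem_filter.mp hc).2
    set S := R.image Prod.fst with hS_def
    have hOS : O ∉ S := by
      intro hOS
      obtain ⟨c, hcR, hc1⟩ := mem_image.mp hOS
      have : c = a0 := out_unique c (hRz c hcR) a0 ha0z (by rw [hc1, ha0O])
      exact hRorb c hcR 0 (by simpa using this.symm)
    have hSne : S.Nonempty := ⟨b.1, mem_image.2 ⟨b, hbR, rfl⟩⟩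
    have hRsub : R ⊆ z.filter (fun a => a.1 ∈ S ∧ a.2 ∈ S) := by
      intro a haR
      have haz : a ∈ z := hRz a haR
      refine mem_filter.2 ⟨haz, mem_image.2 ⟨a, haR, rfl⟩, ?_⟩
      -- show σ a ∈ R
      have hca : σ a ∈ z := hσz a haz
      have hcR : σ a ∈ R := by
        refine mem_filter.2 ⟨hca, ?_⟩
        intro k hk
        -- find a predecessor of σ a in the orbit
        have hk' : σ^[k % n] a0 = σ a := by rw [← per_mod]; exact hk
        obtain ⟨p, hp⟩ : ∃ p : ℕ, σ^[p + 1] a0 = σ a := by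
          rcases Nat.eq_zero_or_pos (k % n) with h0 | h0
          · refine ⟨n - 1, ?_⟩
            have : n - 1 + 1 = n := by omega
            rw [this, hper, ← hk', h0]
            simp
          · refine ⟨k % n - 1, ?_⟩
            have : k % n - 1 + 1 = k % n := by omega
            rw [this, hk']
        set d := σ^[p] a0 with hd_def
        have hdz : d ∈ z := iter_mem p a0 ha0z
        have hσd : σ d = σ a := by rw [hd_def, ← hp, Function.iterate_succ_apply']
        have had : a = d := (σinj d hdz a haz hσd).symm
        exact hRorb a haR p (by rw [← hd_def, ← had])
      have : a.2 = (σ a).1 := (hσ1 a haz).symm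
      rw [this]
      exact mem_image.2 ⟨σ a, hcR, rfl⟩
    have hScard : S.card = R.card := by
      apply Finset.card_image_of_injOn
      intro x hx y hy hxy
      exact out_unique x (hRz x hx) y (hRz y hy) hxy
    have hle := hsub S hOS hSne
    have hle2 : R.card ≤ (z.filter fun a => a.1 ∈ S ∧ a.2 ∈ S).card :=
      Finset.card_le_card hRsub
    have hRpos : 0 < R.card := Finset.card_pos.2 ⟨b, hbR⟩
    omega
  -- conclude
  refine ⟨n, hn, f, finj, f0, ?_⟩
  apply Finset.Subset.antisymm
  · intro b hb
    obtain ⟨k, hk⟩ := cover b hb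
    have hk' : σ^[k % n] a0 = b := by rw [← per_mod]; exact hk
    refine mem_image.2 ⟨⟨k % n, Nat.mod_lt _ hn⟩, mem_univ _, ?_⟩
    rw [arc_eq]
    exact hk'
  · intro b hb
    obtain ⟨i, _, hi⟩ := mem_image.mp hb
    rw [← hi, arc_eq]
    exact iter_mem _ a0 ha0z
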